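/- arXiv:0711.3484 — 7 statements merged into one kernel-verified Lean document; each statement's English description precedes it below -/
import Mathlib

section
/- Let p be an odd prime and let r, d ∈ ℤ/pℤ with d ≠ 0. Then the number of matrices g ∈ GL₂(ℤ/pℤ) with tr(g) = r and det(g) = d equals p · ( p + ((r² − 4d)/p) ). -/
/-!
Writing a matrix with trace `r` as `!![a, b; c, r - a]`, the determinant condition becomes
`b * c = a * (r - a) - d`. Over a finite field with `q` elements the equation `b * c = t` has
`q - 1` solutions, plus `q` more when `t = 0`. Summing over `a` gives `q (q - 1)` plus `q` times
the number of roots of `a * (r - a) = d`, and completing the square turns that quadratic into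
`x ^ 2 = r ^ 2 - 4 * d`, which has `1 + χ(r ^ 2 - 4 * d)` roots in odd characteristic.
Invertibility is automatic since `d ≠ 0`.
-/

open Finset

theorem Units.natCard_setOf_val {M : Type*} [Monoid M] {P : M → Prop}
    (hP : ∀ x, P x → IsUnit x) : Nat.card {u : Mˣ | P u} = Nat.card {x | P x} := by
  rw [← Nat.card_image_of_injective Units.val_injective]
  congr
  ext x
  refine ⟨?_, fun hx => ⟨(hP x hx).unit, hx, rfl⟩⟩
  rintro ⟨u, hu, rfl⟩
  exact hu

theorem card_filter_mul_eq {G₀ : Type*} [GroupWithZero G₀] [Fintype G₀] [DecidableEq G₀]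
    (t : G₀) :
    #{x : G₀ × G₀ | x.1 * x.2 = t} =
      Fintype.card G₀ - 1 + if t = 0 then Fintype.card G₀ else 0 := by
  have fiber (b : G₀) :
      #{c | b * c = t} = if b = 0 then (if t = 0 then Fintype.card G₀ else 0) else 1 := by
    split_ifs with hb ht
    · simp [hb, ht]
    · simp [hb, Ne.symm ht]
    · simp [← eq_inv_mul_iff_mul_eq₀ hb, filter_eq']
  rw [card_filter, Fintype.sum_prod_type]
  simp only [← card_filter, fiber]
  rw [sum_ite, filter_eq', filter_ne']
  simp [add_comm]

def Matrix.finTwoTraceDetEquiv {R : Type*} [CommRing R] (r d : R) :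
    {M : Matrix (Fin 2) (Fin 2) R // M.trace = r ∧ M.det = d} ≃
      Σ a : R, {x : R × R // x.1 * x.2 = a * (r - a) - d} where
  toFun M := ⟨M.1 0 0, (M.1 0 1, M.1 1 0), by
    obtain ⟨M, htr, hdet⟩ := M
    rw [trace_fin_two] at htr
    rw [det_fin_two] at hdet
    linear_combination M 0 0 * htr - hdet⟩
  invFun x := ⟨!![x.1, x.2.1.1; x.2.1.2, r - x.1], by
    obtain ⟨a, ⟨b, c⟩, h⟩ := x
    refine ⟨by simp [trace_fin_two], ?_⟩
    rw [det_fin_two_of]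
    linear_combination -h⟩
  left_inv := by
    rintro ⟨M, htr, -⟩
    rw [trace_fin_two] at htr
    ext i j
    fin_cases i <;> fin_cases j <;> simp [← htr]
  right_inv := by
    rintro ⟨a, ⟨b, c⟩, h⟩
    rfl

theorem Matrix.card_filter_trace_det_fin_two_eq_sum {R : Type*} [CommRing R] [Fintype R]
    [DecidableEq R] (r d : R) :
    #{M : Matrix (Fin 2) (Fin 2) R | M.trace = r ∧ M.det = d} =
      ∑ a : R, #{x : R × R | x.1 * x.2 = a * (r - a) - d} := by
  rw [← Fintype.card_subtype, Fintype.card_congr (finTwoTraceDetEquiv r d), Fintype.card_sigma]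
  simp only [Fintype.card_subtype]

theorem card_filter_mul_sub_eq_quadraticChar {F : Type*} [Field F] [Fintype F] [DecidableEq F]
    (hF : ringChar F ≠ 2) (r d : F) :
    (#{a : F | a * (r - a) = d} : ℤ) = quadraticChar F (r ^ 2 - 4 * d) + 1 := by
  have h2 : (2 : F) ≠ 0 := Ring.two_ne_zero hF
  rw [← quadraticChar_card_sqrts hF, Set.toFinset_ofPred]
  refine congrArg _ (card_nbij' (fun a => 2 * a - r) (fun x => (x + r) / 2) ?_ ?_ ?_ ?_)
  · intro a ha
    simp only [coe_filter, Set.mem_ofPred_eq, mem_univ, true_and] at ha ⊢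
    linear_combination -4 * ha
  · intro x hx
    simp only [coe_filter, Set.mem_ofPred_eq, mem_univ, true_and] at hx ⊢
    field_simp
    linear_combination -hx
  · intro a _
    field_simp
    ring
  · intro x _
    field_simp
    ring

theorem Matrix.card_filter_trace_det_fin_two {F : Type*} [Field F] [Fintype F] [DecidableEq F]
    (hF : ringChar F ≠ 2) (r d : F) :
    (#{M : Matrix (Fin 2) (Fin 2) F | M.trace = r ∧ M.det = d} : ℤ) =
      Fintype.card F * (Fintype.card F + quadraticChar F (r ^ 2 - 4 * d)) := by
  set q : ℤ := (Fintype.card F : ℤ)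
  have fiber (a : F) : (#{x : F × F | x.1 * x.2 = a * (r - a) - d} : ℤ) =
      q - 1 + if a * (r - a) = d then q else 0 := by
    simp only [card_filter_mul_eq, sub_eq_zero]
    push_cast [Nat.one_le_iff_ne_zero.2 Fintype.card_ne_zero]
    split_ifs <;> rfl
  rw [card_filter_trace_det_fin_two_eq_sum, Nat.cast_sum]
  simp only [fiber, sum_add_distrib, sum_const, card_univ, sum_ite, smul_zero, add_zero,
    nsmul_eq_mul]
  rw [card_filter_mul_sub_eq_quadraticChar hF]
  ring

/-- For an odd prime `p` and `r, d ∈ ℤ/pℤ` with `d ≠ 0`, the number of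
`g ∈ GL₂(ℤ/pℤ)` with `tr g = r` and `det g = d` equals `p(p + ((r²-4d)/p))`,
where `(·/p)` is the Legendre symbol applied to an integer lift. -/
theorem card_GL2_fixed_trace_det (p : ℕ) [Fact p.Prime] (hp : p ≠ 2)
    (r d : ZMod p) (hd : d ≠ 0) :
    (Nat.card {g : GL (Fin 2) (ZMod p) |
        Matrix.trace (g : Matrix (Fin 2) (Fin 2) (ZMod p)) = r ∧
        Matrix.det (g : Matrix (Fin 2) (Fin 2) (ZMod p)) = d} : ℤ)
      = p * (p + legendreSym p ((r ^ 2 - 4 * d).val : ℤ)) := by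
  have hunit (M : Matrix (Fin 2) (Fin 2) (ZMod p)) (hM : M.trace = r ∧ M.det = d) : IsUnit M :=
    (Matrix.isUnit_iff_isUnit_det M).2 (hM.2 ▸ hd.isUnit)
  have hchar : ringChar (ZMod p) ≠ 2 := by rwa [ZMod.ringChar_zmod_n]
  rw [Units.natCard_setOf_val hunit, Nat.card_eq_card_toFinset, Set.toFinset_ofPred,
    Matrix.card_filter_trace_det_fin_two hchar, ZMod.card, legendreSym, Int.cast_natCast,
    ZMod.natCast_zmod_val]
end

section
/- Let p be an odd prime, let r be an integer with p ∤ r, and let s ∈ {1, −1}. Then the sum of the Legendre symbols ((r² − 4d)/p) over all d ∈ {1, …, p−1} with (d/p) = s equals −(1 + s·((−1)/p))/2. -/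
/-!
On `d ≠ 0` the indicator of `χ d = s` is `(1 + s χ d) / 2`, so twice the sum is
`∑_{d ≠ 0} χ (r² - 4d) + s ∑_d χ d χ (r² - 4d)`. The first is a complete character sum (zero)
minus its `d = 0` term `χ (r²) = 1`; the second becomes `χ 4 · J(χ, χ) = -χ (-1)` after the
substitution `d = r² x / 4`.
-/

open Finset

section FiniteField

variable {F : Type*} [Field F] [Fintype F] [DecidableEq F]

theorem quadraticChar_sum_sub_mul_eq_zero (hF : ringChar F ≠ 2) (c : F) {b : F} (hb : b ≠ 0) :
    ∑ a, quadraticChar F (c - b * a) = 0 :=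
  (Equiv.sum_comp ((Equiv.mulLeft₀ b hb).trans (Equiv.subLeft c)) (quadraticChar F)).trans
    (quadraticChar_sum_zero hF)

theorem sum_quadraticChar_mul_quadraticChar_sub_mul (hF : ringChar F ≠ 2) {b c : F}
    (hb : b ≠ 0) (hc : c ≠ 0) :
    ∑ a, quadraticChar F a * quadraticChar F (c - b * a) = -quadraticChar F (-b) := by
  have hcb : c / b ≠ 0 := div_ne_zero hc hb
  -- substituting `a = (c / b) x` turns the sum into `χ b` times the Jacobi sum `J(χ, χ)`
  have hsubst (x : F) : quadraticChar F (c / b * x) * quadraticChar F (c - b * (c / b * x)) =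
      quadraticChar F b * (quadraticChar F x * quadraticChar F (1 - x)) := by
    have hsq : c / b * x * (c - b * (c / b * x)) = b * (c / b) ^ 2 * (x * (1 - x)) := by
      field_simp
    rw [← map_mul, hsq, map_mul, map_mul, quadraticChar_sq_one' hcb, mul_one, map_mul]
  rw [← Equiv.sum_comp (Equiv.mulLeft₀ (c / b) hcb)]
  simp only [Equiv.mulLeft₀_apply, hsubst, ← mul_sum]
  change quadraticChar F b * jacobiSum (quadraticChar F) (quadraticChar F) = _
  have hJ := jacobiSum_nontrivial_inv (quadraticChar_ne_one hF)
  rw [(quadraticChar_isQuadratic F).inv] at hJ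
  rw [hJ, neg_eq_neg_one_mul b, map_mul]
  ring

theorem two_mul_ite_quadraticChar_eq (a : F) {s : ℤ} (hs : s = 1 ∨ s = -1) :
    2 * (if quadraticChar F a = s then 1 else 0) =
      1 + s * quadraticChar F a - if a = 0 then 1 else 0 := by
  by_cases ha : a = 0
  · subst ha
    rcases hs with rfl | rfl <;> simp
  · rcases hs with rfl | rfl <;> rcases quadraticChar_dichotomy ha with h | h <;> simp [h, ha]

theorem two_mul_sum_filter_quadraticChar_eq (hF : ringChar F ≠ 2) {b c : F}
    (hb : b ≠ 0) (hc : c ≠ 0) {s : ℤ} (hs : s = 1 ∨ s = -1) :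
    2 * ∑ a with quadraticChar F a = s, quadraticChar F (c - b * a) =
      -(quadraticChar F c + s * quadraticChar F (-b)) := by
  calc 2 * ∑ a with quadraticChar F a = s, quadraticChar F (c - b * a)
      = ∑ a, (quadraticChar F (c - b * a) + s * (quadraticChar F a * quadraticChar F (c - b * a))
          - if a = 0 then quadraticChar F (c - b * a) else 0) := by
        rw [sum_filter, mul_sum]
        refine sum_congr rfl fun a _ => ?_
        have h := two_mul_ite_quadraticChar_eq a hs
        split_ifs at h ⊢ <;> linear_combination quadraticChar F (c - b * a) * h
    _ = -(quadraticChar F c + s * quadraticChar F (-b)) := by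
        rw [sum_sub_distrib, sum_add_distrib, ← mul_sum,
          quadraticChar_sum_sub_mul_eq_zero hF c hb,
          sum_quadraticChar_mul_quadraticChar_sub_mul hF hb hc, Fintype.sum_ite_eq', mul_zero,
          sub_zero]
        ring

end FiniteField

theorem ZMod.sum_Icc_one_sub_one_intCast {M : Type*} [AddCommMonoid M] (p : ℕ) [NeZero p]
    (f : ZMod p → M) :
    ∑ d ∈ Icc (1 : ℤ) (p - 1), f d = ∑ a ∈ univ.erase 0, f a := by
  refine sum_nbij' (fun d => (d : ZMod p)) (fun a => (a.val : ℤ)) ?_ ?_ ?_ ?_ fun _ _ => rfl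
  · intro d hd
    rw [mem_Icc] at hd
    rw [mem_erase, Ne, ZMod.intCast_zmod_eq_zero_iff_dvd]
    exact ⟨fun hdvd => by linarith [Int.le_of_dvd (by omega) hdvd], mem_univ _⟩
  · intro a ha
    rw [mem_erase, Ne, ← ZMod.val_eq_zero] at ha
    rw [mem_Icc]
    have := ZMod.val_lt a
    omega
  · intro d hd
    rw [mem_Icc] at hd
    rw [ZMod.val_intCast]
    exact Int.emod_eq_of_lt (by omega) (by omega)
  · intro a _
    simp

/-- For an odd prime `p`, an integer `r` with `p ∤ r`, and `s ∈ {1,-1}`: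
`Σ_{d=1,…,p-1, (d/p)=s} ((r²-4d)/p) = -(1 + s·((-1)/p))/2`. -/
theorem sum_legendre_r_sq_sub_four_d (p : ℕ) [Fact p.Prime] (hp : p ≠ 2)
    (r : ℤ) (hr : ¬ (p : ℤ) ∣ r) (s : ℤ) (hs : s = 1 ∨ s = -1) :
    ((∑ d ∈ (Finset.Icc (1 : ℤ) ((p : ℤ) - 1)).filter
        (fun d => legendreSym p d = s), legendreSym p (r ^ 2 - 4 * d) : ℤ) : ℚ)
      = -((1 : ℚ) + s * legendreSym p (-1)) / 2 := by
  have hF : ringChar (ZMod p) ≠ 2 := by rwa [ZMod.ringChar_zmod_n]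
  have h2 : (2 : ZMod p) ≠ 0 := Ring.two_ne_zero hF
  have h4 : (4 : ZMod p) ≠ 0 := by
    rw [show (4 : ZMod p) = 2 ^ 2 by norm_num]; exact pow_ne_zero 2 h2
  have hs0 : (0 : ℤ) ≠ s := by rcases hs with rfl | rfl <;> decide
  have hr0 : (r : ZMod p) ≠ 0 := mt (ZMod.intCast_zmod_eq_zero_iff_dvd r p).mp hr
  have hsum : ∑ d ∈ (Icc (1 : ℤ) (p - 1)).filter (fun d => legendreSym p d = s),
        legendreSym p (r ^ 2 - 4 * d) =
      ∑ a : ZMod p with quadraticChar (ZMod p) a = s, quadraticChar (ZMod p) (r ^ 2 - 4 * a) := by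
    rw [sum_filter, sum_filter,
      ← sum_erase univ (a := 0) (by rw [quadraticChar_zero, if_neg hs0])]
    simp only [legendreSym, Int.cast_sub, Int.cast_mul, Int.cast_pow, Int.cast_ofNat]
    exact ZMod.sum_Icc_one_sub_one_intCast p
      (fun a => if quadraticChar (ZMod p) a = s then quadraticChar (ZMod p) (r ^ 2 - 4 * a) else 0)
  have hmain := two_mul_sum_filter_quadraticChar_eq hF h4 (pow_ne_zero 2 hr0) hs
  rw [quadraticChar_sq_one' hr0, show (-4 : ZMod p) = -1 * 2 ^ 2 by norm_num, map_mul,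
    quadraticChar_sq_one' h2, mul_one, ← hsum] at hmain
  rw [eq_div_iff two_ne_zero, mul_comm]
  exact_mod_cast hmain
end

section
/- Let p be an odd prime and r ∈ ℤ/pℤ. Let N₊ be the number of g ∈ GL₂(ℤ/pℤ) with tr(g) = r and (det(g)/p) = 1, and N₋ the number of g ∈ GL₂(ℤ/pℤ) with tr(g) = r and (det(g)/p) = −1. Then N₊ − N₋ = ((−1)/p) · p(p−1) if r = 0 in ℤ/pℤ, and N₊ − N₋ = −((−1)/p) · p if r ≠ 0 in ℤ/pℤ. -/
/-!
The quadratic character `χ` of `ℤ/pℤ` is `±1` on determinants of invertible matrices, so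
`N₊ - N₋ = ∑ χ (det g)` over `g ∈ GL₂` of trace `r`; since `χ 0 = 0` the sum may run over all
matrices of trace `r`. Writing these as `!![a, b; c, r - a]`, the sum over `b, c` of
`χ (a (r - a) - b c)` is `p χ (a (r - a))`, because for `b ≠ 0` the map `c ↦ a (r - a) - b c` is a
bijection and `χ` sums to zero. Finally `∑ₐ χ a χ (r - a)` is `(p - 1) χ (-1)` for `r = 0`, and
for `r ≠ 0` it is the Jacobi sum `J(χ, χ) = J(χ, χ⁻¹) = -χ (-1)`.
-/

open Matrix Finset

namespace MulChar

lemma IsQuadratic.sum_eq_card_sub_card {R α : Type*} [CommMonoidWithZero R]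
    {χ : MulChar R ℤ} (hχ : χ.IsQuadratic) (s : Finset α) (d : α → R) :
    ∑ x ∈ s, χ (d x) = #{x ∈ s | χ (d x) = 1} - #{x ∈ s | χ (d x) = -1} := by
  classical
  rw [natCast_card_filter, natCast_card_filter, ← sum_sub_distrib]
  refine sum_congr rfl fun x _ ↦ ?_
  rcases hχ (d x) with h | h | h <;> simp [h]

variable {F R : Type*} [Field F] [Fintype F] [CommRing R]

lemma sum_mul_apply_sub_eq_mul_jacobiSum (χ ψ : MulChar F R) {r : F} (hr : r ≠ 0) :
    ∑ a, χ a * ψ (r - a) = χ r * ψ r * jacobiSum χ ψ := by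
  rw [jacobiSum, mul_sum]
  refine (Fintype.sum_bijective _ (mulLeft_bijective₀ r hr) _ _ fun x ↦ ?_).symm
  rw [show r - r * x = r * (1 - x) by ring, map_mul, map_mul]
  ring

variable [IsDomain R]

lemma sum_mul_inv_apply_sub [DecidableEq F] {χ : MulChar F R} (hχ : χ ≠ 1) (r : F) :
    ∑ a, χ a * χ⁻¹ (r - a) = if r = 0 then (Fintype.card F - 1) * χ (-1) else -χ (-1) := by
  split_ifs with hr
  · subst hr
    have h (a : F) : χ a * χ⁻¹ (0 - a) = if a = 0 then 0 else χ (-1) := by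
      split_ifs with ha
      · simp [ha]
      · rw [inv_apply', ← map_mul, zero_sub, inv_neg, mul_neg, mul_inv_cancel₀ ha]
    simp only [h]
    rw [sum_ite, sum_const_zero, zero_add, sum_const, filter_ne', card_erase_of_mem (mem_univ _),
      card_univ, nsmul_eq_mul, Nat.cast_pred Fintype.card_pos]
  · rw [sum_mul_apply_sub_eq_mul_jacobiSum _ _ hr, inv_apply', ← map_mul, mul_inv_cancel₀ hr,
      map_one, one_mul, jacobiSum_nontrivial_inv hχ]

lemma sum_sum_apply_sub_mul {χ : MulChar F R} (hχ : χ ≠ 1) (m : F) :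
    ∑ b, ∑ c, χ (m - b * c) = Fintype.card F * χ m := by
  rw [sum_eq_single 0]
  · simp
  · intro b _ hb
    rw [← sum_eq_zero_of_ne_one hχ]
    exact Fintype.sum_bijective _
      ((Equiv.subLeft m).bijective.comp (mulLeft_bijective₀ b hb)) _ _ fun _ ↦ rfl
  · simp

end MulChar

lemma quadraticChar_sum_mul_sub {F : Type*} [Field F] [Fintype F] [DecidableEq F]
    (hF : ringChar F ≠ 2) (r : F) :
    ∑ a, quadraticChar F (a * (r - a)) =
      if r = 0 then (Fintype.card F - 1) * quadraticChar F (-1) else -quadraticChar F (-1) := by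
  have h := MulChar.sum_mul_inv_apply_sub (quadraticChar_ne_one hF) r
  rw [(quadraticChar_isQuadratic F).inv] at h
  simpa only [map_mul] using h

lemma Fintype.sum_units_eq_sum {M N : Type*} [Monoid M] [Fintype M] [Fintype Mˣ]
    [AddCommMonoid N] (f : M → N) (hf : ∀ a, ¬IsUnit a → f a = 0) :
    ∑ u : Mˣ, f u = ∑ a, f a :=
  Fintype.sum_of_injective _ Units.val_injective _ _
    (fun a ha ↦ hf a fun h ↦ ha ⟨h.unit, rfl⟩) fun _ ↦ rfl

lemma Matrix.sum_apply_det_of_trace_eq_fin_two {R M : Type*} [CommRing R] [Fintype R]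
    [DecidableEq R] [AddCommMonoid M] (f : R → M) (r : R) :
    ∑ A : Matrix (Fin 2) (Fin 2) R with A.trace = r, f A.det =
      ∑ a, ∑ b, ∑ c, f (a * (r - a) - b * c) := by
  simp only [← Fintype.sum_prod_type']
  refine sum_nbij' (fun A ↦ (A 0 0, A 0 1, A 1 0)) (fun x ↦ !![x.1, x.2.1; x.2.2, r - x.1])
    (by simp) (by simp [trace_fin_two]) (fun A hA ↦ ?_) (by simp) (fun A hA ↦ ?_) <;>
    obtain htr : A 0 0 + A 1 1 = r := by simpa [trace_fin_two] using hA
  · simp only [← htr, add_sub_cancel_left]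
    exact (eta_fin_two A).symm
  · simp only [det_fin_two, ← htr, add_sub_cancel_left]

lemma legendreSym_natCast_val (p : ℕ) [Fact p.Prime] (x : ZMod p) :
    legendreSym p x.val = quadraticChar (ZMod p) x := by
  simp [legendreSym]

/-- For an odd prime `p` and `r ∈ ℤ/pℤ`, letting `N₊` (resp. `N₋`) denote the number
of `g ∈ GL₂(ℤ/pℤ)` with `tr g = r` and Legendre symbol of `det g` equal to `1`
(resp. `-1`), one has `N₊ - N₋ = ((-1)/p)·p(p-1)` if `r = 0` and
`N₊ - N₋ = -((-1)/p)·p` if `r ≠ 0`. -/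
theorem GL2_trace_det_legendre_bias (p : ℕ) [Fact p.Prime] (hp : p ≠ 2) (r : ZMod p) :
    (Nat.card {g : GL (Fin 2) (ZMod p) |
        Matrix.trace (g : Matrix (Fin 2) (Fin 2) (ZMod p)) = r ∧
        legendreSym p ((Matrix.det (g : Matrix (Fin 2) (Fin 2) (ZMod p))).val : ℤ) = 1} : ℤ)
      - (Nat.card {g : GL (Fin 2) (ZMod p) |
        Matrix.trace (g : Matrix (Fin 2) (Fin 2) (ZMod p)) = r ∧
        legendreSym p ((Matrix.det (g : Matrix (Fin 2) (Fin 2) (ZMod p))).val : ℤ) = -1} : ℤ)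
      = if r = 0 then legendreSym p (-1) * (p * (p - 1)) else -(legendreSym p (-1) * p) := by
  have hF : ringChar (ZMod p) ≠ 2 := by rwa [ZMod.ringChar_zmod_n]
  have hχ : legendreSym p (-1) = quadraticChar (ZMod p) (-1) := by simp [legendreSym]
  have hsingular (A : Matrix (Fin 2) (Fin 2) (ZMod p)) (hA : ¬IsUnit A) :
      (if A.trace = r then quadraticChar (ZMod p) A.det else 0) = 0 := by
    rw [isUnit_iff_isUnit_det, isUnit_iff_ne_zero, not_not] at hA
    simp [hA]
  simp only [legendreSym_natCast_val, Nat.card_coe_set_eq, Set.ncard_eq_toFinset_card',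
    Set.toFinset_ofPred, ← filter_filter]
  rw [← (quadraticChar_isQuadratic _).sum_eq_card_sub_card, sum_filter,
    Fintype.sum_units_eq_sum _ hsingular, ← sum_filter, sum_apply_det_of_trace_eq_fin_two]
  simp only [MulChar.sum_sum_apply_sub_mul (quadraticChar_ne_one hF), ← mul_sum,
    quadraticChar_sum_mul_sub hF, ZMod.card, hχ]
  split_ifs <;> ring
end

section
/- For each k ∈ {1, 2, 3} and each r ∈ ℤ/2^kℤ, the number of g ∈ GL₂(ℤ/2^kℤ) with tr(g) = r equals 2^{3k−1} if r is even (i.e., r lies in the image of multiplication by 2 on ℤ/2^kℤ), and equals 2^{3k−2} if r is odd. -/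
open Matrix

noncomputable def glQuadEquiv (n : ℕ) [NeZero n] (r : ZMod n) :
    {g : GL (Fin 2) (ZMod n) |
        Matrix.trace (g : Matrix (Fin 2) (Fin 2) (ZMod n)) = r} ≃
    {v : ZMod n × ZMod n × ZMod n × ZMod n //
      (∃ e, (v.1 * v.2.2.2 - v.2.1 * v.2.2.1) * e = 1) ∧ v.1 + v.2.2.2 = r} where
  toFun g := ⟨((g.1 : Matrix (Fin 2) (Fin 2) (ZMod n)) 0 0,
               (g.1 : Matrix (Fin 2) (Fin 2) (ZMod n)) 0 1,
               (g.1 : Matrix (Fin 2) (Fin 2) (ZMod n)) 1 0,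
               (g.1 : Matrix (Fin 2) (Fin 2) (ZMod n)) 1 1), by
    constructor
    · have hu : IsUnit (g.1 : Matrix (Fin 2) (Fin 2) (ZMod n)).det :=
        (Matrix.isUnit_iff_isUnit_det _).mp g.1.isUnit
      obtain ⟨e, he⟩ := isUnit_iff_exists_inv.mp hu
      rw [Matrix.det_fin_two] at he
      exact ⟨e, he⟩
    · have := g.2
      rw [Set.mem_setOf_eq, Matrix.trace_fin_two] at this
      exact this⟩
  invFun v :=
    ⟨((Matrix.isUnit_iff_isUnit_det
        !![v.1.1, v.1.2.1; v.1.2.2.1, v.1.2.2.2]).mpr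
        (isUnit_iff_exists_inv.mpr
          ⟨v.2.1.choose, by
            rw [Matrix.det_fin_two_of]; exact v.2.1.choose_spec⟩)).unit, by
      show Matrix.trace _ = r
      rw [IsUnit.unit_spec, Matrix.trace_fin_two_of]
      exact v.2.2⟩
  left_inv g := by
    ext : 2
    simp only [IsUnit.unit_spec]
    exact (Matrix.eta_fin_two _).symm
  right_inv v := by
    ext : 1
    obtain ⟨⟨a, b, c, d⟩, h⟩ := v
    simp [IsUnit.unit_spec, Matrix.of_apply]

theorem card_GL2_trace_aux (n : ℕ) [NeZero n] (r : ZMod n) :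
    Nat.card {g : GL (Fin 2) (ZMod n) |
        Matrix.trace (g : Matrix (Fin 2) (Fin 2) (ZMod n)) = r}
      = Fintype.card {v : ZMod n × ZMod n × ZMod n × ZMod n //
          (∃ e, (v.1 * v.2.2.2 - v.2.1 * v.2.2.1) * e = 1) ∧ v.1 + v.2.2.2 = r} := by
  rw [Nat.card_congr (glQuadEquiv n r), Nat.card_eq_fintype_card]

set_option maxRecDepth 40000 in
set_option maxHeartbeats 4000000 in
/-- For `k ∈ {1,2,3}` and `r ∈ ℤ/2^kℤ`, the number of `g ∈ GL₂(ℤ/2^kℤ)` with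
`tr g = r` equals `2^(3k-1)` if `r` is even (i.e. in the image of multiplication
by `2`) and `2^(3k-2)` if `r` is odd. -/
theorem card_GL2_fixed_trace_two_power (k : ℕ) (hk : k = 1 ∨ k = 2 ∨ k = 3)
    (r : ZMod (2 ^ k)) :
    Nat.card {g : GL (Fin 2) (ZMod (2 ^ k)) |
        Matrix.trace (g : Matrix (Fin 2) (Fin 2) (ZMod (2 ^ k))) = r}
      = if ∃ t : ZMod (2 ^ k), r = 2 * t then 2 ^ (3 * k - 1) else 2 ^ (3 * k - 2) := by
  rcases hk with rfl | rfl | rfl <;>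
    · rw [card_GL2_trace_aux]
      revert r
      decide
end

section
/- Let p be an odd prime. Then the number of g ∈ GL₂(ℤ/pℤ) such that det(1 − g) ≠ 0 equals p(p³ − 2p² − p + 3). -/
/-!
Inclusion–exclusion over all `q ^ 4` matrices `M` over a field with `q` elements: the matrices
with `det M = 0` and those with `det (1 - M) = 0` are equinumerous (via `M ↦ 1 - M`),
`q ^ 4 - |GL₂|` of each, and a `2 × 2` matrix lies in both sets iff its trace is `1` and its
determinant `0`, i.e. it is `!![a, b; c, 1 - a]` with `b * c = a * (1 - a)`. Counting the
solutions of `b * c = t` gives `q ^ 2 + q` such matrices.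
-/

open Matrix

theorem Nat.card_subtype_not_and_not_add {α : Type*} [Finite α] (P Q : α → Prop) :
    Nat.card {x // ¬P x ∧ ¬Q x} + Nat.card {x // P x} + Nat.card {x // Q x} =
      Nat.card α + Nat.card {x // P x ∧ Q x} := by
  have hunion := Set.ncard_union_add_ncard_inter {x | P x} {x | Q x}
  have hcompl := Set.ncard_add_ncard_compl ({x | P x} ∪ {x | Q x})
  rw [show ({x | P x} ∪ {x | Q x})ᶜ = {x | ¬P x ∧ ¬Q x} by ext; simp] at hcompl
  change Set.ncard {x | ¬P x ∧ ¬Q x} + Set.ncard {x | P x} + Set.ncard {x | Q x} =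
    _ + Set.ncard ({x | P x} ∩ {x | Q x})
  omega

theorem Nat.card_subtype_units {M : Type*} [Monoid M] (P : M → Prop) :
    Nat.card {u : Mˣ // P u} = Nat.card {m : M // IsUnit m ∧ P m} :=
  Nat.card_congr
    { toFun u := ⟨u.1, u.1.isUnit, u.2⟩
      invFun m := ⟨m.2.1.unit, m.2.2⟩
      left_inv _ := Subtype.ext (Units.ext rfl)
      right_inv _ := rfl }

open Classical in
theorem Nat.card_subtype_mul_eq {K : Type*} [Field K] [Fintype K] (t : K) :
    (Nat.card {x : K × K // x.1 * x.2 = t} : ℤ) =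
      Fintype.card K - 1 + if t = 0 then (Fintype.card K : ℤ) else 0 := by
  have hfiber (b : K) :
      Nat.card {c : K // b * c = t} =
        if b = 0 then (if t = 0 then Fintype.card K else 0) else 1 := by
    split_ifs with hb ht
    · simp [hb, ht]
    · simp [hb, Ne.symm ht]
    · simp [← eq_inv_mul_iff_mul_eq₀ hb]
  rw [Nat.card_congr (Equiv.subtypeProdEquivSigmaSubtype fun b c => b * c = t), Nat.card_sigma]
  simp only [hfiber]
  rw [Fintype.sum_eq_add_sum_compl 0, if_pos rfl,
    Finset.sum_congr rfl fun b hb => if_neg (Finset.mem_compl.1 hb ∘ Finset.mem_singleton.2)]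
  have : 1 ≤ Fintype.card K := Fintype.card_pos
  split_ifs <;> simp [Finset.card_compl] <;> push_cast [this] <;> ring

namespace Matrix

section CommRing

variable {R : Type*} [CommRing R]

theorem det_one_sub_fin_two (M : Matrix (Fin 2) (Fin 2) R) :
    det (1 - M) = 1 - trace M + det M := by
  simp only [det_fin_two, trace_fin_two, sub_apply, one_apply_eq, one_apply_ne zero_ne_one,
    one_apply_ne one_ne_zero]
  ring

theorem det_eq_zero_and_det_one_sub_eq_zero_iff (M : Matrix (Fin 2) (Fin 2) R) :
    det M = 0 ∧ det (1 - M) = 0 ↔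
      M 1 1 = 1 - M 0 0 ∧ M 0 1 * M 1 0 = M 0 0 * (1 - M 0 0) := by
  rw [det_one_sub_fin_two, det_fin_two, trace_fin_two]
  constructor
  · rintro ⟨hdet, htrace⟩
    have hd : M 1 1 = 1 - M 0 0 := by linear_combination hdet - htrace
    exact ⟨hd, by linear_combination M 0 0 * hd - hdet⟩
  · rintro ⟨hd, hbc⟩
    exact ⟨by linear_combination M 0 0 * hd - hbc, by linear_combination (M 0 0 - 1) * hd - hbc⟩

variable (R) in
def detEqZeroAndDetOneSubEqZeroEquiv :
    {M : Matrix (Fin 2) (Fin 2) R // det M = 0 ∧ det (1 - M) = 0} ≃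
      Σ a : R, {x : R × R // x.1 * x.2 = a * (1 - a)} where
  toFun M :=
    ⟨M.1 0 0, (M.1 0 1, M.1 1 0), ((det_eq_zero_and_det_one_sub_eq_zero_iff M.1).1 M.2).2⟩
  invFun x := ⟨!![x.1, x.2.1.1; x.2.1.2, 1 - x.1],
    (det_eq_zero_and_det_one_sub_eq_zero_iff _).2 ⟨rfl, x.2.2⟩⟩
  left_inv := by
    rintro ⟨M, hM⟩
    have hd := ((det_eq_zero_and_det_one_sub_eq_zero_iff M).1 hM).1
    ext i j
    fin_cases i <;> fin_cases j <;> simp [hd]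
  right_inv _ := rfl

theorem card_det_one_sub_eq_zero {n : Type*} [Fintype n] [DecidableEq n] :
    Nat.card {M : Matrix n n R // det (1 - M) = 0} = Nat.card {M : Matrix n n R // det M = 0} :=
  Nat.card_congr ((Equiv.subLeft 1).subtypeEquiv fun _ => Iff.rfl)

end CommRing

section FiniteField

variable {K : Type*} [Field K] [Fintype K]

local notation "q" => Fintype.card K

theorem card_det_eq_zero_and_det_one_sub_eq_zero :
    Nat.card {M : Matrix (Fin 2) (Fin 2) K // det M = 0 ∧ det (1 - M) = 0} = q ^ 2 + q := by
  classical
  have hroots : (Finset.univ.filter fun a : K => a * (1 - a) = 0) = {0, 1} := by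
    ext a
    simp [sub_eq_zero, eq_comm (a := (1 : K))]
  zify
  rw [Nat.card_congr (detEqZeroAndDetOneSubEqZeroEquiv K), Nat.card_sigma]
  push_cast
  simp only [Nat.card_subtype_mul_eq]
  rw [Finset.sum_add_distrib, Finset.sum_ite, Finset.sum_const_zero, add_zero, Finset.sum_const,
    Finset.sum_const, hroots, Finset.card_pair zero_ne_one]
  simp only [Finset.card_univ, Int.nsmul_eq_mul, Nat.cast_ofNat]
  ring

theorem card_det_eq_zero_add_card_GL {n : Type*} [Fintype n] [DecidableEq n] :
    Nat.card {M : Matrix n n K // det M = 0} + Nat.card (GL n K) = Nat.card (Matrix n n K) := by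
  rw [← Nat.card_subtype_true (α := GL n K), Nat.card_subtype_units fun _ => True]
  simp only [and_true, isUnit_iff_isUnit_det, isUnit_iff_ne_zero]
  exact Set.ncard_add_ncard_compl {M : Matrix n n K | det M = 0}

theorem card_GL_fin_two_det_one_sub_ne_zero :
    (Nat.card {g : GL (Fin 2) K // det (1 - (g : Matrix (Fin 2) (Fin 2) K)) ≠ 0} : ℤ) =
      q * ((q : ℤ) ^ 3 - 2 * q ^ 2 - q + 3) := by
  have hmat : Nat.card (Matrix (Fin 2) (Fin 2) K) = q ^ 4 := by
    simp only [Matrix, Nat.card_eq_fintype_card, Fintype.card_pi, Finset.prod_const,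
      Finset.card_univ, Fintype.card_fin]
    ring
  have hGL : (Nat.card (GL (Fin 2) K) : ℤ) = (q ^ 2 - 1) * (q ^ 2 - q) := by
    have : 1 ≤ q := Fintype.card_pos
    rw [card_GL_field, Fin.prod_univ_two]
    simp only [Fin.val_zero, Fin.val_one, pow_zero, pow_one]
    push_cast [Nat.one_le_pow _ _ this, Nat.le_self_pow two_ne_zero]
    ring
  have hsingular := card_det_eq_zero_add_card_GL (K := K) (n := Fin 2)
  have hincl := Nat.card_subtype_not_and_not_add (fun M : Matrix (Fin 2) (Fin 2) K => det M = 0)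
    fun M => det (1 - M) = 0
  rw [hmat] at hsingular
  rw [card_det_one_sub_eq_zero, card_det_eq_zero_and_det_one_sub_eq_zero, hmat] at hincl
  rw [Nat.card_subtype_units fun M => det (1 - M) ≠ 0]
  simp only [isUnit_iff_isUnit_det, isUnit_iff_ne_zero]
  zify at hincl hsingular
  linear_combination hincl - 2 * hsingular + 2 * hGL

end FiniteField

end Matrix

theorem card_GL2_one_sub_invertible_general (p : ℕ) [Fact p.Prime] :
    (Nat.card {g : GL (Fin 2) (ZMod p) |
        Matrix.det (1 - (g : Matrix (Fin 2) (Fin 2) (ZMod p))) ≠ 0} : ℤ)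
      = p * ((p : ℤ) ^ 3 - 2 * (p : ℤ) ^ 2 - p + 3) := by
  have h := card_GL_fin_two_det_one_sub_ne_zero (K := ZMod p)
  rwa [ZMod.card] at h

/-- For an odd prime `p`, the number of `g ∈ GL₂(ℤ/pℤ)` with `det(1 - g) ≠ 0`
equals `p(p³ - 2p² - p + 3)`. -/
theorem card_GL2_one_sub_invertible (p : ℕ) [Fact p.Prime] (hp : p ≠ 2) :
    (Nat.card {g : GL (Fin 2) (ZMod p) |
        Matrix.det (1 - (g : Matrix (Fin 2) (Fin 2) (ZMod p))) ≠ 0} : ℤ)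
      = p * ((p : ℤ) ^ 3 - 2 * (p : ℤ) ^ 2 - p + 3) :=
  card_GL2_one_sub_invertible_general p
end

section
/- Let p be an odd prime, n a positive integer, r ∈ ℤ/p^nℤ and d ∈ (ℤ/p^nℤ)^*. Then the number of 2×2 matrices A over ℤ/p^nℤ with tr(A) = r and det(A) = d is at most p^{2n} · (1 + 3/p). -/
/-!
Writing `A = !![a, b; c, r - a]`, the matrices in question correspond to triples with
`b * c = a * (r - a) - d`. If `gcd (b, p^n) = p^j`, the equation `b * c = y` has at most `p^j`
solutions `c`, and none unless `p^j ∣ y`; there are `φ (p^(n-j))` such `b`. Two solutions `a, a₀`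
of `p^j ∣ a * (r - a) - d` satisfy `p^j ∣ (a - a₀) * (a - (r - a₀))`, so `p^⌈j/2⌉` divides one of
the factors and there are at most `2 p^(n - ⌈j/2⌉)` such `a`. Summing over `j`, the resulting
geometric sums add up to less than `p^(2n-1) (p + 3)`.
-/

open Finset

theorem Nat.pow_dvd_or_pow_dvd_of_pow_dvd_mul {p j a b : ℕ} (hp : p.Prime) (h : p ^ j ∣ a * b) :
    p ^ ((j + 1) / 2) ∣ a ∨ p ^ ((j + 1) / 2) ∣ b := by
  rcases eq_or_ne a 0 with rfl | ha
  · exact Or.inl (dvd_zero _)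
  rcases eq_or_ne b 0 with rfl | hb
  · exact Or.inr (dvd_zero _)
  rw [hp.pow_dvd_iff_le_factorization (mul_ne_zero ha hb), Nat.factorization_mul ha hb,
    Finsupp.add_apply] at h
  rw [hp.pow_dvd_iff_le_factorization ha, hp.pow_dvd_iff_le_factorization hb]
  omega

namespace ZMod

variable {m : ℕ} [NeZero m]

theorem card_filter_natCast_dvd_sub_le {e : ℕ} (he : e ∣ m) (a₀ : ZMod m) :
    #{a : ZMod m | (e : ZMod m) ∣ a - a₀} ≤ m / e := by
  have hme : 0 < m / e := Nat.div_pos (Nat.le_of_dvd (NeZero.pos m) he)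
    (Nat.pos_of_dvd_of_pos he (NeZero.pos m))
  calc #{a : ZMod m | (e : ZMod m) ∣ a - a₀}
      ≤ #{x : ZMod m | (m / e) • x = 0} := by
        refine card_le_card_of_injOn (· - a₀) (fun a ha => ?_) sub_left_injective.injOn
        obtain ⟨t, ht⟩ := (mem_filter.1 ha).2
        simp only [coe_filter, mem_univ, true_and, Set.mem_ofPred_eq, ht, nsmul_eq_mul,
          ← mul_assoc, ← Nat.cast_mul, Nat.div_mul_cancel he, natCast_self, zero_mul]
    _ ≤ m / e := IsAddCyclic.card_nsmul_eq_zero_le hme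

theorem natCast_gcd_val_dvd_mul (b c : ZMod m) : ((m.gcd b.val : ℕ) : ZMod m) ∣ b * c :=
  ((Nat.cast_dvd_cast (Nat.gcd_dvd_right m b.val)).trans (natCast_zmod_val b).dvd).mul_right c

theorem card_filter_mul_eq_zero_le (b : ZMod m) : #{c : ZMod m | b * c = 0} ≤ m.gcd b.val := by
  calc #{c : ZMod m | b * c = 0}
      ≤ #{c : ZMod m | m.gcd b.val • c = 0} := by
        refine card_le_card fun c hc => ?_
        simp only [mem_filter, mem_univ, true_and] at hc ⊢
        refine gcd_nsmul_eq_zero.2 ⟨?_, ?_⟩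
        · rw [nsmul_eq_mul, natCast_self, zero_mul]
        · rw [nsmul_eq_mul, natCast_zmod_val, hc]
    _ ≤ m.gcd b.val :=
      IsAddCyclic.card_nsmul_eq_zero_le (Nat.gcd_pos_of_pos_left _ (NeZero.pos m))

theorem card_filter_mul_eq_le (b y : ZMod m) :
    #{c : ZMod m | b * c = y} ≤ if ((m.gcd b.val : ℕ) : ZMod m) ∣ y then m.gcd b.val else 0 := by
  split_ifs with hy
  · obtain ⟨c₀, hc₀⟩ | hno_solution := em (∃ c₀, b * c₀ = y)
    · refine (card_le_card_of_injOn (· - c₀) (fun c hc => ?_)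
        sub_left_injective.injOn).trans (card_filter_mul_eq_zero_le b)
      simp_all [mul_sub]
    · simp [filter_eq_empty_iff.2 fun c _ hc => hno_solution ⟨c, hc⟩]
  · refine (card_eq_zero.2 (filter_eq_empty_iff.2 fun c _ hc => hy ?_)).le
    exact hc ▸ natCast_gcd_val_dvd_mul b c

theorem card_filter_gcd_val_eq {e : ℕ} (he : e ∣ m) :
    #{b : ZMod m | m.gcd b.val = e} = Nat.totient (m / e) := by
  rw [Nat.totient_div_of_dvd he]
  refine card_nbij' val Nat.cast (fun b hb => ?_) (fun k hk => ?_) (fun b _ => natCast_zmod_val b)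
    (fun k hk => val_cast_of_lt (mem_range.1 (mem_filter.1 hk).1))
  · simp_all [val_lt]
  · simp only [coe_filter, mem_range, Set.mem_ofPred_eq] at hk
    simp [val_cast_of_lt hk.1, hk.2]

theorem sum_apply_gcd_val {M : Type*} [AddCommMonoid M] (G : ℕ → M) :
    ∑ b : ZMod m, G (m.gcd b.val) = ∑ e ∈ m.divisors, Nat.totient (m / e) • G e := by
  rw [← sum_fiberwise_of_maps_to (t := m.divisors) (g := fun b : ZMod m => m.gcd b.val)
    (fun b _ => Nat.mem_divisors.2 ⟨Nat.gcd_dvd_left _ _, NeZero.ne m⟩)]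
  refine sum_congr rfl fun e he => ?_
  rw [← card_filter_gcd_val_eq (Nat.dvd_of_mem_divisors he), ← sum_const]
  exact sum_congr rfl fun b hb => by rw [(mem_filter.1 hb).2]

theorem card_filter_mul_eq_apply_le (f : ZMod m → ZMod m) :
    #{x : ZMod m × ZMod m × ZMod m | x.2.1 * x.2.2 = f x.1} ≤
      ∑ e ∈ m.divisors, Nat.totient (m / e) * (e * #{a : ZMod m | (e : ZMod m) ∣ f a}) := by
  calc #{x : ZMod m × ZMod m × ZMod m | x.2.1 * x.2.2 = f x.1}
      = ∑ b : ZMod m, ∑ a : ZMod m, #{c : ZMod m | b * c = f a} := by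
        simp only [card_filter, Fintype.sum_prod_type]
        exact sum_comm
    _ ≤ ∑ b : ZMod m, ∑ a : ZMod m,
          if ((m.gcd b.val : ℕ) : ZMod m) ∣ f a then m.gcd b.val else 0 :=
        sum_le_sum fun b _ => sum_le_sum fun a _ => card_filter_mul_eq_le b (f a)
    _ = ∑ e ∈ m.divisors, Nat.totient (m / e) * (e * #{a : ZMod m | (e : ZMod m) ∣ f a}) := by
        simp only [sum_ite, sum_const_zero, add_zero, sum_const, smul_eq_mul, mul_comm (#_)]
        exact sum_apply_gcd_val (fun e => e * #{a : ZMod m | (e : ZMod m) ∣ f a})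

theorem natCast_dvd_iff_dvd_val {k : ℕ} (hk : k ∣ m) (x : ZMod m) :
    (k : ZMod m) ∣ x ↔ k ∣ x.val := by
  constructor
  · rintro ⟨t, rfl⟩
    rw [val_mul, Nat.dvd_mod_iff hk, val_natCast]
    exact ((Nat.dvd_mod_iff hk).2 dvd_rfl).mul_right _
  · rintro ⟨t, ht⟩
    exact ⟨t, by rw [← natCast_zmod_val x, ht, Nat.cast_mul]⟩

theorem pow_dvd_or_pow_dvd_of_pow_dvd_mul {p n j : ℕ} [Fact p.Prime] (hj : j ≤ n)
    {x y : ZMod (p ^ n)} (h : ((p ^ j : ℕ) : ZMod (p ^ n)) ∣ x * y) :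
    ((p ^ ((j + 1) / 2) : ℕ) : ZMod (p ^ n)) ∣ x ∨
      ((p ^ ((j + 1) / 2) : ℕ) : ZMod (p ^ n)) ∣ y := by
  have hdvd : ∀ {i}, i ≤ n → p ^ i ∣ p ^ n := fun hi => pow_dvd_pow p hi
  rw [natCast_dvd_iff_dvd_val (hdvd hj), val_mul, Nat.dvd_mod_iff (hdvd hj)] at h
  rw [natCast_dvd_iff_dvd_val (hdvd (by omega)), natCast_dvd_iff_dvd_val (hdvd (by omega))]
  exact Nat.pow_dvd_or_pow_dvd_of_pow_dvd_mul Fact.out h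

theorem card_filter_pow_dvd_mul_sub_sub_le {p n j : ℕ} [Fact p.Prime] (hjn : j ≤ n)
    (r d : ZMod (p ^ n)) :
    #{a : ZMod (p ^ n) | ((p ^ j : ℕ) : ZMod (p ^ n)) ∣ a * (r - a) - d}
      ≤ 2 * p ^ (n - (j + 1) / 2) := by
  set i := (j + 1) / 2
  obtain ⟨a₀, ha₀⟩ | hno_root := em (∃ a₀, ((p ^ j : ℕ) : ZMod (p ^ n)) ∣ a₀ * (r - a₀) - d)
  · calc #{a : ZMod (p ^ n) | ((p ^ j : ℕ) : ZMod (p ^ n)) ∣ a * (r - a) - d}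
        ≤ #(({a : ZMod (p ^ n) | ((p ^ i : ℕ) : ZMod (p ^ n)) ∣ a - a₀} : Finset _) ∪
            ({a : ZMod (p ^ n) | ((p ^ i : ℕ) : ZMod (p ^ n)) ∣ a - (r - a₀)} : Finset _)) := by
          refine card_le_card fun a ha => ?_
          have hroots : ((p ^ j : ℕ) : ZMod (p ^ n)) ∣ (a - a₀) * (a - (r - a₀)) := by
            have := dvd_sub ha₀ (mem_filter.1 ha).2
            convert this using 1
            ring
          simpa [mem_union] using pow_dvd_or_pow_dvd_of_pow_dvd_mul hjn hroots
      _ ≤ p ^ n / p ^ i + p ^ n / p ^ i :=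
          (card_union_le _ _).trans (add_le_add
            (card_filter_natCast_dvd_sub_le (pow_dvd_pow p (by omega)) _)
            (card_filter_natCast_dvd_sub_le (pow_dvd_pow p (by omega)) _))
      _ = 2 * p ^ (n - i) := by rw [Nat.pow_div (by omega) (Fact.out : p.Prime).pos]; ring
  · rw [filter_eq_empty_iff.2 fun a _ ha => hno_root ⟨a, ha⟩, card_empty]
    exact Nat.zero_le _

-- The summation index `i` stands for the exponent `j = i + 1`, and `k - i / 2 = k + 1 - ⌈j/2⌉`.
theorem card_filter_mul_eq_mul_sub_sub_le (p k : ℕ) [hp : Fact p.Prime]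
    (r d : ZMod (p ^ (k + 1))) :
    #{x : ZMod (p ^ (k + 1)) × ZMod (p ^ (k + 1)) × ZMod (p ^ (k + 1)) |
        x.2.1 * x.2.2 = x.1 * (r - x.1) - d} ≤
      p ^ k * (p - 1) * p ^ (k + 1) + ∑ i ∈ range k, p ^ k * (p - 1) * (2 * p ^ (k - i / 2))
        + p ^ (k + 1) * (2 * p ^ ((k + 1) / 2)) := by
  set A : ℕ → ℕ := fun j =>
    #{a : ZMod (p ^ (k + 1)) | ((p ^ j : ℕ) : ZMod (p ^ (k + 1))) ∣ a * (r - a) - d}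
  have hA : ∀ j ≤ k + 1, A j ≤ 2 * p ^ (k + 1 - (j + 1) / 2) :=
    fun j hj => card_filter_pow_dvd_mul_sub_sub_le hj r d
  calc _ ≤ ∑ e ∈ (p ^ (k + 1)).divisors, Nat.totient (p ^ (k + 1) / e) *
          (e * #{a : ZMod (p ^ (k + 1)) | (e : ZMod (p ^ (k + 1))) ∣ a * (r - a) - d}) :=
        card_filter_mul_eq_apply_le (fun a => a * (r - a) - d)
    _ = ∑ j ∈ range (k + 2), Nat.totient (p ^ (k + 1 - j)) * (p ^ j * A j) := by
        rw [Nat.divisors_prime_pow hp.out, sum_map]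
        refine sum_congr rfl fun j hj => ?_
        rw [Function.Embedding.coeFn_mk,
          Nat.pow_div (by simpa [Nat.lt_succ_iff] using hj) hp.out.pos]
    _ ≤ _ := by
        rw [sum_range_succ', sum_range_succ, add_comm, ← add_assoc]
        refine Nat.add_le_add (Nat.add_le_add ?_ (sum_le_sum fun i hi => ?_)) ?_
        · rw [Nat.sub_zero, Nat.totient_prime_pow_succ hp.out, pow_zero, one_mul]
          gcongr
          exact (card_filter_le _ _).trans (by rw [Finset.card_univ, ZMod.card])
        · have hi : i < k := mem_range.1 hi
          calc Nat.totient (p ^ (k + 1 - (i + 1))) * (p ^ (i + 1) * A (i + 1))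
              = p ^ k * (p - 1) * A (i + 1) := by
                rw [show k + 1 - (i + 1) = k - i - 1 + 1 by omega,
                  Nat.totient_prime_pow_succ hp.out,
                  show p ^ k = p ^ (k - i - 1) * p ^ (i + 1) by rw [← pow_add]; congr 1; omega]
                ring
            _ ≤ p ^ k * (p - 1) * (2 * p ^ (k - i / 2)) := by
                gcongr
                simpa [show k + 1 - (i + 1 + 1) / 2 = k - i / 2 by omega]
                  using hA (i + 1) (by omega)
        · rw [Nat.sub_self, pow_zero, Nat.totient_one, one_mul]
          gcongr
          simpa [show k + 1 - (k + 1 + 1) / 2 = (k + 1) / 2 by omega] using hA (k + 1) le_rfl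

end ZMod

theorem sub_one_mul_sum_range_pow_sub_div_two {R : Type*} [CommRing R] (q : R) (k : ℕ) :
    (q - 1) * ∑ i ∈ range k, q ^ (k - i / 2) + q ^ ((k + 1) / 2 + 1) + q ^ (k / 2 + 1)
      = 2 * q ^ (k + 1) := by
  induction k with
  | zero => norm_num; ring
  | succ k ih =>
    have hsum : ∑ i ∈ range (k + 1), q ^ (k + 1 - i / 2)
        = q * ∑ i ∈ range k, q ^ (k - i / 2) + q ^ ((k + 1) / 2 + 1) := by
      rw [sum_range_succ, mul_sum, show k + 1 - k / 2 = (k + 1) / 2 + 1 by omega]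
      congr 1
      exact sum_congr rfl fun i hi => by
        rw [← pow_succ', show k - i / 2 + 1 = k + 1 - i / 2 by have := mem_range.1 hi; omega]
    rw [hsum, show (k + 1 + 1) / 2 = k / 2 + 1 by omega]
    linear_combination q * ih

theorem pow_mul_sub_one_mul_add_sum_add_le {R : Type*} [CommRing R] [LinearOrder R]
    [IsStrictOrderedRing R] {q : R} (hq : 0 ≤ q) (k : ℕ) :
    q ^ k * (q - 1) * q ^ (k + 1) + ∑ i ∈ range k, q ^ k * (q - 1) * (2 * q ^ (k - i / 2))
        + q ^ (k + 1) * (2 * q ^ ((k + 1) / 2)) ≤ q ^ k * ((q + 3) * q ^ (k + 1)) := by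
  have hid := sub_one_mul_sum_range_pow_sub_div_two q k
  have hslack : 0 ≤ 2 * q ^ k * q ^ (k / 2 + 1) := by positivity
  have hsum : ∑ i ∈ range k, q ^ k * (q - 1) * (2 * q ^ (k - i / 2))
      = 2 * q ^ k * ((q - 1) * ∑ i ∈ range k, q ^ (k - i / 2)) := by
    rw [mul_sum, mul_sum]
    exact sum_congr rfl fun _ _ => by ring
  rw [hsum]
  linear_combination (2 * q ^ k) * hid + hslack

def Matrix.traceDetEquiv {R : Type*} [CommRing R] (r d : R) :
    {A : Matrix (Fin 2) (Fin 2) R | A.trace = r ∧ A.det = d} ≃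
      {x : R × R × R // x.2.1 * x.2.2 = x.1 * (r - x.1) - d} where
  toFun A := ⟨(A.1 0 0, A.1 0 1, A.1 1 0), by
    obtain ⟨htr, hdet⟩ := A.2
    rw [Matrix.trace_fin_two] at htr
    rw [Matrix.det_fin_two] at hdet
    linear_combination A.1 0 0 * htr - hdet⟩
  invFun x := ⟨!![x.1.1, x.1.2.1; x.1.2.2, r - x.1.1], by
    refine ⟨by simp [Matrix.trace_fin_two], ?_⟩
    rw [Matrix.det_fin_two_of]
    linear_combination -x.2⟩
  left_inv A := by
    obtain ⟨htr, -⟩ := A.2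
    rw [Matrix.trace_fin_two] at htr
    ext i j
    fin_cases i <;> fin_cases j <;> simp [← htr]
  right_inv x := rfl

theorem card_matrices_fixed_trace_det_le_general (p : ℕ) [Fact p.Prime]
    (n : ℕ) (hn : 0 < n) (r d : ZMod (p ^ n)) :
    (Nat.card {A : Matrix (Fin 2) (Fin 2) (ZMod (p ^ n)) |
        Matrix.trace A = r ∧ Matrix.det A = d} : ℚ)
      ≤ (p : ℚ) ^ (2 * n) * (1 + 3 / p) := by
  obtain ⟨k, rfl⟩ : ∃ k, n = k + 1 := ⟨n - 1, by omega⟩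
  have hp : (0 : ℚ) < p := by exact_mod_cast (Fact.out : p.Prime).pos
  rw [Nat.card_congr (Matrix.traceDetEquiv r d), Nat.card_eq_fintype_card, Fintype.card_subtype]
  calc _ ≤ ((p ^ k * (p - 1) * p ^ (k + 1)
          + ∑ i ∈ range k, p ^ k * (p - 1) * (2 * p ^ (k - i / 2))
          + p ^ (k + 1) * (2 * p ^ ((k + 1) / 2)) : ℕ) : ℚ) := by
        exact_mod_cast ZMod.card_filter_mul_eq_mul_sub_sub_le p k r d
    _ ≤ (p : ℚ) ^ k * ((p + 3) * p ^ (k + 1)) := by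
        push_cast [Nat.cast_sub (Fact.out : p.Prime).one_le]
        exact pow_mul_sub_one_mul_add_sum_add_le hp.le k
    _ = (p : ℚ) ^ (2 * (k + 1)) * (1 + 3 / p) := by
        field_simp
        ring

/-- **Lemma (Bonn lemma, upper bound).**
For an odd prime `p`, a positive integer `n`, `r ∈ ℤ/p^nℤ` and a unit
`d ∈ (ℤ/p^nℤ)^*`, the number of 2×2 matrices `A` over `ℤ/p^nℤ` with
`tr A = r` and `det A = d` is at most `p^{2n}(1 + 3/p)`. -/
theorem card_matrices_fixed_trace_det_le (p : ℕ) [Fact p.Prime] (hp : p ≠ 2)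
    (n : ℕ) (hn : 0 < n) (r d : ZMod (p ^ n)) (hd : IsUnit d) :
    (Nat.card {A : Matrix (Fin 2) (Fin 2) (ZMod (p ^ n)) |
        Matrix.trace A = r ∧ Matrix.det A = d} : ℚ)
      ≤ (p : ℚ) ^ (2 * n) * (1 + 3 / p) :=
  card_matrices_fixed_trace_det_le_general p n hn r d
end

section
/- Let p be an odd prime, n a positive integer, and y ∈ ℤ/p^nℤ. Then the number of pairs (b,c) ∈ (ℤ/p^nℤ)² with 4bc = y equals (m+1)·φ(p^n) if y is the reduction of p^m·y' for integers m ≥ 0 and y' with p ∤ y' and m < n, and equals n·φ(p^n) + p^n if y = 0. -/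
/-!
Since `p` is odd, `4` is a unit, so it suffices to count the solutions of `b * c = y`.
For fixed `b`, `c ↦ b * c` is additive with kernel of size `g = gcd(b, p^n)` and image the
multiples of `g`, so `b` contributes `g` solutions if `g ∣ y` and none otherwise.
Passing from `gcd(v, p^k)` to `gcd(v, p^(k+1))` adds `φ(p^(k+1))` exactly for the
`p^(n-k-1)` values `v < p^n` divisible by `p^(k+1)`, so summing over `v` adds `φ(p^n)`
at each step. For `y = 0` every `b` contributes, giving `∑ gcd(v, p^n)`; if `y` has valuation
`m < n`, the contribution of `v` is `gcd(v, p^(m+1))` except when `p^(m+1) ∣ v`, where it is `0`.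
-/

open Finset

theorem Nat.card_filter_range_dvd {d N : ℕ} (hd : d ∣ N) :
    #{v ∈ range N | d ∣ v} = N / d := by
  rcases Nat.eq_zero_or_pos d with rfl | hd0
  · simp [Nat.eq_zero_of_zero_dvd hd]
  have h := Nat.count_modEq_card N hd0 0
  simp only [Nat.modEq_zero_iff_dvd, Nat.count_eq_card_filter_range, Nat.zero_mod,
    Nat.mod_eq_zero_of_dvd hd, lt_irrefl, if_false, add_zero] at h
  exact h

theorem Nat.sum_range_ite_dvd {d N : ℕ} (hd : d ∣ N) (a : ℕ) :
    ∑ v ∈ range N, (if d ∣ v then a else 0) = a * (N / d) := by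
  rw [← sum_filter, sum_const, Nat.card_filter_range_dvd hd, smul_eq_mul, mul_comm]

namespace Nat.Prime

theorem gcd_pow_eq_gcd_pow_of_not_dvd {p : ℕ} (hp : p.Prime) {m n v : ℕ} (hmn : m ≤ n)
    (hv : ¬p ^ (m + 1) ∣ v) :
    Nat.gcd v (p ^ n) = Nat.gcd v (p ^ m) := by
  obtain ⟨j, -, hj⟩ := (Nat.dvd_prime_pow hp).1 (Nat.gcd_dvd_right v (p ^ n))
  have hjm : j ≤ m := by
    by_contra! h
    exact hv ((pow_dvd_pow p h).trans (hj ▸ Nat.gcd_dvd_left v (p ^ n)))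
  apply Nat.dvd_antisymm
  · exact Nat.dvd_gcd (Nat.gcd_dvd_left _ _) (hj ▸ pow_dvd_pow p hjm)
  · exact Nat.gcd_dvd_gcd_of_dvd_right _ (pow_dvd_pow p hmn)

theorem gcd_pow_succ {p : ℕ} (hp : p.Prime) (m v : ℕ) :
    Nat.gcd v (p ^ (m + 1))
      = Nat.gcd v (p ^ m) + if p ^ (m + 1) ∣ v then φ (p ^ (m + 1)) else 0 := by
  split_ifs with h
  · rw [Nat.gcd_eq_right h, Nat.gcd_eq_right ((pow_dvd_pow p m.le_succ).trans h),
      Nat.totient_prime_pow_succ hp, pow_succ, Nat.mul_sub_one, Nat.add_sub_cancel' ?_]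
    exact Nat.le_mul_of_pos_right _ hp.pos
  · rw [hp.gcd_pow_eq_gcd_pow_of_not_dvd m.le_succ h, add_zero]

theorem totient_pow_mul_pow_sub {p : ℕ} (hp : p.Prime) {m n : ℕ} (hmn : m ≤ n)
    (hm : 0 < m) :
    φ (p ^ m) * p ^ (n - m) = φ (p ^ n) := by
  rw [Nat.totient_prime_pow hp hm, Nat.totient_prime_pow hp (hm.trans_le hmn), mul_right_comm,
    ← pow_add]
  congr 2
  omega

theorem sum_range_gcd_pow {p : ℕ} (hp : p.Prime) {m n : ℕ} (hmn : m ≤ n) :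
    ∑ v ∈ range (p ^ n), Nat.gcd v (p ^ m) = p ^ n + m * φ (p ^ n) := by
  induction m with
  | zero => simp
  | succ m ih =>
    simp only [hp.gcd_pow_succ, sum_add_distrib, ih (by omega),
      Nat.sum_range_ite_dvd (pow_dvd_pow p hmn), Nat.pow_div hmn hp.pos,
      hp.totient_pow_mul_pow_sub hmn m.succ_pos]
    ring

theorem sum_range_gcd_pow_ite_dvd {p : ℕ} (hp : p.Prime) {m n w : ℕ} (hmn : m < n)
    (hw : p ^ m ∣ w) (hw' : ¬p ^ (m + 1) ∣ w) :
    ∑ v ∈ range (p ^ n), (if Nat.gcd v (p ^ n) ∣ w then Nat.gcd v (p ^ n) else 0)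
      = (m + 1) * φ (p ^ n) := by
  have hterm : ∀ v, (if Nat.gcd v (p ^ n) ∣ w then Nat.gcd v (p ^ n) else 0)
      + (if p ^ (m + 1) ∣ v then p ^ (m + 1) else 0) = Nat.gcd v (p ^ (m + 1)) := by
    intro v
    by_cases hv : p ^ (m + 1) ∣ v
    · have hgcd : ¬Nat.gcd v (p ^ n) ∣ w :=
        fun h => hw' ((Nat.dvd_gcd hv (pow_dvd_pow p hmn)).trans h)
      rw [if_neg hgcd, if_pos hv, Nat.gcd_eq_right hv, zero_add]
    · rw [hp.gcd_pow_eq_gcd_pow_of_not_dvd hmn.le hv, if_pos ((Nat.gcd_dvd_right _ _).trans hw),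
        if_neg hv, add_zero, hp.gcd_pow_eq_gcd_pow_of_not_dvd m.le_succ hv]
  have hsum := sum_congr rfl fun v (_ : v ∈ range (p ^ n)) => hterm v
  rw [sum_add_distrib, Nat.sum_range_ite_dvd (pow_dvd_pow p hmn),
    Nat.mul_div_cancel' (pow_dvd_pow p hmn), hp.sum_range_gcd_pow hmn] at hsum
  linarith

end Nat.Prime

namespace ZMod

variable {M : ℕ} [NeZero M]

theorem sum_univ_val_eq_sum_range {β : Type*} [AddCommMonoid β] (f : ℕ → β) :
    ∑ c : ZMod M, f c.val = ∑ v ∈ range M, f v :=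
  sum_bij (fun c _ => c.val) (fun c _ => mem_range.2 c.val_lt)
    (fun _ _ _ _ h => val_injective M h)
    (fun v hv => ⟨v, mem_univ _, val_natCast_of_lt (mem_range.1 hv)⟩) (fun _ _ => rfl)

theorem exists_mul_eq_iff_gcd_dvd (b z : ZMod M) :
    (∃ c, b * c = z) ↔ Nat.gcd b.val M ∣ z.val := by
  constructor
  · rintro ⟨c, rfl⟩
    rw [val_mul, Nat.dvd_mod_iff (Nat.gcd_dvd_right _ _)]
    exact (Nat.gcd_dvd_left _ _).mul_right _
  · rintro ⟨t, ht⟩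
    -- `b⁻¹` is the Bézout coefficient: `b * b⁻¹ = gcd b.val M`
    refine ⟨b⁻¹ * t, ?_⟩
    rw [← mul_assoc, mul_inv_eq_gcd, ← Nat.cast_mul, ← ht, natCast_zmod_val]

theorem card_filter_mul_eq_zero (b : ZMod M) : #{c | b * c = 0} = Nat.gcd b.val M := by
  have h := IsAddCyclic.card_nsmulAddMonoidHom_ker (ZMod M) b.val
  rw [Nat.card_zmod, Nat.gcd_comm, Nat.card_eq_fintype_card, Fintype.card_subtype] at h
  simpa [nsmul_eq_mul] using h

theorem card_filter_mul_eq (b z : ZMod M) :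
    #{c | b * c = z} = if Nat.gcd b.val M ∣ z.val then Nat.gcd b.val M else 0 := by
  split_ifs with h
  · rw [← card_filter_mul_eq_zero b]
    exact AddMonoidHom.card_fiber_eq_of_mem_range (AddMonoidHom.mulLeft b)
      ((exists_mul_eq_iff_gcd_dvd b z).2 h) ⟨0, mul_zero b⟩
  · rw [card_eq_zero, filter_eq_empty_iff]
    exact fun c _ hc => h ((exists_mul_eq_iff_gcd_dvd b z).1 ⟨c, hc⟩)

theorem card_filter_mul_eq_sum_range (z : ZMod M) :
    #{bc : ZMod M × ZMod M | bc.1 * bc.2 = z}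
      = ∑ v ∈ range M, if Nat.gcd v M ∣ z.val then Nat.gcd v M else 0 := by
  rw [← sum_univ_val_eq_sum_range (fun v => if Nat.gcd v M ∣ z.val then Nat.gcd v M else 0),
    card_filter, Fintype.sum_prod_type]
  simp only [← card_filter, card_filter_mul_eq]

theorem dvd_val_intCast_iff {d : ℕ} (hd : d ∣ M) (a : ℤ) :
    d ∣ (a : ZMod M).val ↔ (d : ℤ) ∣ a := by
  rw [← Int.natCast_dvd_natCast, val_intCast, Int.emod_def,
    dvd_sub_left ((Int.natCast_dvd_natCast.2 hd).mul_right _)]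

end ZMod

theorem IsUnit.natCard_setOf_mul_mul_eq {R : Type*} [Monoid R] {u : R} (hu : IsUnit u) (z : R) :
    Nat.card {bc : R × R | u * bc.1 * bc.2 = z} = Nat.card {bc : R × R | bc.1 * bc.2 = z} :=
  Nat.card_congr <| (hu.unit.mulLeft.prodCongr (Equiv.refl R)).subtypeEquiv fun _ => Iff.rfl

theorem card_four_mul_eq_zmod_prime_pow_general (p : ℕ) [Fact p.Prime] (hp : p ≠ 2)
    (n : ℕ) (y : ZMod (p ^ n)) :
    (∀ m : ℕ, ∀ y' : ℤ, ¬ (p : ℤ) ∣ y' → m < n →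
        y = ((p : ℤ) ^ m * y' : ℤ) →
        Nat.card {bc : ZMod (p ^ n) × ZMod (p ^ n) | 4 * bc.1 * bc.2 = y}
          = (m + 1) * Nat.totient (p ^ n))
    ∧ (y = 0 →
        Nat.card {bc : ZMod (p ^ n) × ZMod (p ^ n) | 4 * bc.1 * bc.2 = y}
          = n * Nat.totient (p ^ n) + p ^ n) := by
  have hp' : p.Prime := Fact.out
  have h4 : IsUnit (4 : ZMod (p ^ n)) := by
    simpa using (ZMod.isUnit_iff_coprime 4 (p ^ n)).2
      (((Nat.coprime_two_left.2 (hp'.odd_of_ne_two hp)).pow_left 2).pow_right n)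
  simp only [h4.natCard_setOf_mul_mul_eq, Nat.card_eq_fintype_card, Fintype.card_subtype,
    Set.mem_ofPred_eq, ZMod.card_filter_mul_eq_sum_range]
  refine ⟨fun m y' hy' hmn hy => ?_, fun hy => ?_⟩
  · subst hy
    have hdvd : ∀ k ≤ n, p ^ k ∣ (((p : ℤ) ^ m * y' : ℤ) : ZMod (p ^ n)).val
        ↔ (p : ℤ) ^ k ∣ p ^ m * y' := fun k hk => by
      rw [ZMod.dvd_val_intCast_iff (pow_dvd_pow p hk), Nat.cast_pow]
    refine hp'.sum_range_gcd_pow_ite_dvd hmn ((hdvd m hmn.le).2 (dvd_mul_right _ _)) ?_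
    rw [hdvd (m + 1) hmn, pow_succ,
      mul_dvd_mul_iff_left (pow_ne_zero m (Int.natCast_ne_zero.2 hp'.ne_zero))]
    exact hy'
  · simp only [hy, ZMod.val_zero, dvd_zero, if_true, hp'.sum_range_gcd_pow le_rfl, add_comm]

/-- **Sublemma (solutions of `4bc = y` mod `p^n`).**
For an odd prime `p`, `n ≥ 1` and `y ∈ ℤ/p^nℤ`, the number of pairs `(b,c)` with
`4bc = y` equals `(m+1)·φ(p^n)` if `y` is the reduction of `p^m·y'` with `p ∤ y'`
and `m < n`, and equals `n·φ(p^n) + p^n` if `y = 0`. -/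
theorem card_four_mul_eq_zmod_prime_pow (p : ℕ) [Fact p.Prime] (hp : p ≠ 2)
    (n : ℕ) (hn : 0 < n) (y : ZMod (p ^ n)) :
    (∀ m : ℕ, ∀ y' : ℤ, ¬ (p : ℤ) ∣ y' → m < n →
        y = ((p : ℤ) ^ m * y' : ℤ) →
        Nat.card {bc : ZMod (p ^ n) × ZMod (p ^ n) | 4 * bc.1 * bc.2 = y}
          = (m + 1) * Nat.totient (p ^ n))
    ∧ (y = 0 →
        Nat.card {bc : ZMod (p ^ n) × ZMod (p ^ n) | 4 * bc.1 * bc.2 = y}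
          = n * Nat.totient (p ^ n) + p ^ n) :=
  card_four_mul_eq_zmod_prime_pow_general p hp n y
end
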